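/- arXiv:1704.05739 — 6 statements merged into one kernel-verified Lean document; each statement's English description precedes it below -/
import Mathlib

section
/- Let $a : \mathbb{N} \to \mathbb{N}$ satisfy $a(0) = 0$, $a(1) = 1$, and for $p \geq 2$, $a(p) = \max_{1 \leq k \leq \lceil p/2 \rceil} \{ k + a(k-1) + a(p-k) \}$. Then for all $p \geq 2$, the maximum is attained at $k = \lceil p/2 \rceil$, i.e., $a(p) = \lceil p/2 \rceil + a(\lceil p/2 \rceil - 1) + a(p - \lceil p/2 \rceil)$. -/
/-!
The maximization recurrence is solved by the function `balanced` defined by always choosing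
`k = ⌈p/2⌉` (it is `n ↦ ∑_{k ≤ n} popcount k`).  In odd/even form it reads
`balanced (2n+1) = 2 balanced n + n + 1` and `balanced (2n+2) = balanced (n+1) + balanced n + n + 1`,
and a strong induction on `u + v` over the parities of `u` and `v` shows the superadditivity
`balanced u + balanced v + u + 1 ≤ balanced (u + v + 1)` for `u ≤ v`.  With `u = k - 1`,
`v = p - k` this says that every other choice of `k` is no better, so `balanced` satisfies the
recurrence, and by strong induction it is the only solution.
-/

def balanced : ℕ → ℕ
  | 0 => 0
  | p + 1 => (p + 2) / 2 + balanced ((p + 2) / 2 - 1) + balanced (p + 1 - (p + 2) / 2)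

namespace balanced

theorem eq_half_add {p : ℕ} (hp : 1 ≤ p) :
    balanced p = (p + 1) / 2 + balanced ((p + 1) / 2 - 1) + balanced (p - (p + 1) / 2) := by
  obtain ⟨q, rfl⟩ : ∃ q, p = q + 1 := ⟨p - 1, by omega⟩
  rw [balanced]

@[simp] theorem zero : balanced 0 = 0 := by rw [balanced]

theorem two_mul_add_one (n : ℕ) : balanced (2 * n + 1) = 2 * balanced n + n + 1 := by
  rw [eq_half_add (by omega), show (2 * n + 1 + 1) / 2 = n + 1 by omega,
    show 2 * n + 1 - (n + 1) = n by omega, Nat.add_sub_cancel]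
  ring

theorem two_mul_add_two (n : ℕ) :
    balanced (2 * n + 2) = balanced (n + 1) + balanced n + n + 1 := by
  rw [eq_half_add (by omega), show (2 * n + 2 + 1) / 2 = n + 1 by omega,
    show 2 * n + 2 - (n + 1) = n + 1 by omega, Nat.add_sub_cancel]
  ring

@[simp] theorem one : balanced 1 = 1 := by simpa using two_mul_add_one 0

theorem strictMono : StrictMono balanced := by
  refine strictMono_nat_of_lt_succ fun n => ?_
  induction n using Nat.strong_induction_on with
  | _ n ih =>
    rcases Nat.eq_zero_or_pos n with rfl | hn
    · simp
    obtain ⟨m, rfl | rfl⟩ : ∃ m, n = 2 * m + 1 ∨ n = 2 * m + 2 := ⟨(n - 1) / 2, by omega⟩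
    · have := ih m (by omega)
      rw [two_mul_add_one, two_mul_add_two]
      omega
    · have := ih m (by omega)
      rw [two_mul_add_two, show 2 * m + 2 + 1 = 2 * (m + 1) + 1 by ring, two_mul_add_one]
      omega

theorem add_le {u v : ℕ} (huv : u ≤ v) :
    balanced u + balanced v + u + 1 ≤ balanced (u + v + 1) := by
  induction h : u + v using Nat.strong_induction_on generalizing u v with
  | _ _ ih =>
    subst h
    have hind (x y : ℕ) (hxy : x ≤ y) (hlt : x + y < u + v) :
        balanced x + balanced y + x + 1 ≤ balanced (x + y + 1) := ih _ hlt hxy rfl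
    rcases Nat.eq_zero_or_pos u with rfl | hu
    · simpa [Nat.succ_le_iff] using strictMono (Nat.lt_succ_self v)
    obtain ⟨a, rfl | rfl⟩ : ∃ a, u = 2 * a + 1 ∨ u = 2 * a + 2 := ⟨(u - 1) / 2, by omega⟩ <;>
    obtain ⟨b, rfl | rfl⟩ : ∃ b, v = 2 * b + 1 ∨ v = 2 * b + 2 := ⟨(v - 1) / 2, by omega⟩
    · have h₁ := hind a b (by omega) (by omega)
      rw [show 2 * a + 1 + (2 * b + 1) + 1 = 2 * (a + b + 1) + 1 by ring, two_mul_add_one,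
        two_mul_add_one, two_mul_add_one]
      omega
    · have h₁ := hind a b (by omega) (by omega)
      have h₂ := hind a (b + 1) (by omega) (by omega)
      rw [show 2 * a + 1 + (2 * b + 2) + 1 = 2 * (a + b + 1) + 2 by ring, two_mul_add_one,
        two_mul_add_two, two_mul_add_two]
      ring_nf at h₁ h₂ ⊢
      omega
    · have h₁ := hind a b (by omega) (by omega)
      have h₂ := hind (a + 1) b (by omega) (by omega)
      rw [show 2 * a + 2 + (2 * b + 1) + 1 = 2 * (a + b + 1) + 2 by ring, two_mul_add_one,
        two_mul_add_two, two_mul_add_two]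
      ring_nf at h₁ h₂ ⊢
      omega
    · have h₁ := hind a (b + 1) (by omega) (by omega)
      -- for `a = b` the second bound is the first one with the roles of `a` and `b` swapped
      have h₂ : balanced (a + 1) + balanced b + a + 1 ≤ balanced (a + (b + 1) + 1) := by
        rcases Nat.lt_or_ge a b with hab | hab
        · have := hind (a + 1) b (by omega) (by omega)
          ring_nf at this ⊢
          omega
        · obtain rfl : a = b := by omega
          omega
      rw [show 2 * a + 2 + (2 * b + 2) + 1 = 2 * (a + b + 2) + 1 by ring, two_mul_add_one,
        two_mul_add_two, two_mul_add_two]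
      ring_nf at h₁ h₂ ⊢
      omega

theorem eq_sup (p : ℕ) :
    balanced p =
      (Finset.Icc 1 ((p + 1) / 2)).sup fun k => k + balanced (k - 1) + balanced (p - k) := by
  rcases Nat.eq_zero_or_pos p with rfl | hp
  · simp
  apply le_antisymm
  · rw [eq_half_add hp]
    exact Finset.le_sup (f := fun k => k + balanced (k - 1) + balanced (p - k))
      (Finset.mem_Icc.mpr ⟨by omega, le_rfl⟩)
  · refine Finset.sup_le fun k hk => ?_
    rw [Finset.mem_Icc] at hk
    have := add_le (show k - 1 ≤ p - k by omega)
    rw [show k - 1 + (p - k) + 1 = p by omega] at this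
    omega

end balanced

theorem eq_balanced_of_rec (a : ℕ → ℕ) (ha0 : a 0 = 0) (ha1 : a 1 = 1)
    (harec : ∀ p, 2 ≤ p →
      a p = (Finset.Icc 1 ((p + 1) / 2)).sup (fun k => k + a (k - 1) + a (p - k))) :
    a = balanced := by
  funext n
  induction n using Nat.strong_induction_on with
  | _ n ih =>
    match n with
    | 0 => simp [ha0]
    | 1 => simp [ha1]
    | p + 2 =>
      rw [harec _ (by omega), balanced.eq_sup]
      refine Finset.sup_congr rfl fun k hk => ?_
      rw [Finset.mem_Icc] at hk
      rw [ih (k - 1) (by omega), ih (p + 2 - k) (by omega)]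

/-- If `a 0 = 0`, `a 1 = 1` and for `p ≥ 2`,
`a p = max_{1 ≤ k ≤ ⌈p/2⌉} (k + a (k-1) + a (p-k))`, then for every `p ≥ 2` the maximum
is attained at `k = ⌈p/2⌉`, i.e. `a p = ⌈p/2⌉ + a (⌈p/2⌉ - 1) + a (p - ⌈p/2⌉)`.
(Here `⌈p/2⌉ = (p+1)/2` with natural division.) -/
theorem stmt_3 (a : ℕ → ℕ) (ha0 : a 0 = 0) (ha1 : a 1 = 1)
    (harec : ∀ p, 2 ≤ p →
      a p = (Finset.Icc 1 ((p + 1) / 2)).sup (fun k => k + a (k - 1) + a (p - k))) :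
    ∀ p, 2 ≤ p → a p = (p + 1) / 2 + a ((p + 1) / 2 - 1) + a (p - (p + 1) / 2) := by
  obtain rfl := eq_balanced_of_rec a ha0 ha1 harec
  exact fun p hp => balanced.eq_half_add (by omega)
end

section
/- Let $a : \mathbb{N} \to \mathbb{N}$ satisfy $a(0)=0$, $a(1)=1$, and $a(p) = \lceil p/2 \rceil + a(\lceil p/2 \rceil) + a(\lceil p/2 \rceil - 1)$ for $p \geq 2$. Then $a(n) = \Theta(n \log n)$; in particular there exist constants $c_1, c_2 > 0$ such that $c_1 \, n \log n \leq a(n) \leq c_2 \, n \log n$ for all $n \geq 2$. -/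
/-!
Writing `m = ⌈n/2⌉`, one has `clog₂ n = clog₂ m + 1` for `n ≥ 2`, so strong induction along the
recurrence gives `n · clog₂ n ≤ 4 a(n)` and `a(n) ≤ n (clog₂ n + 1)`. Since
`log₂ n ≤ clog₂ n < log₂ n + 1` and `log₂ n ≥ 1` for `n ≥ 2`, both bounds are `Θ(n log₂ n)`.
-/

theorem Nat.clog_succ_le_clog_add_one (b k : ℕ) : Nat.clog b (k + 1) ≤ Nat.clog b k + 1 := by
  rcases le_or_gt b 1 with hb | hb
  · simp [Nat.clog_of_left_le_one hb]
  refine Nat.clog_le_of_le_pow ?_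
  have hk := Nat.le_pow_clog hb k
  have hpos : 1 ≤ b ^ Nat.clog b k := Nat.one_le_pow _ _ (by omega)
  rw [pow_succ]
  nlinarith

theorem Nat.clog_two_of_two_le {n : ℕ} (hn : 2 ≤ n) :
    Nat.clog 2 n = Nat.clog 2 ((n + 1) / 2) + 1 := by
  simpa using Nat.clog_of_two_le one_lt_two hn

namespace Real

theorem logb_natCast_nonneg (b n : ℕ) : 0 ≤ logb b n :=
  div_nonneg (log_natCast_nonneg n) (log_natCast_nonneg b)

theorem logb_natCast_le_clog (b n : ℕ) : logb b n ≤ Nat.clog b n := by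
  rw [← natCeil_logb_natCast]
  exact Nat.le_ceil _

theorem natCast_clog_lt_logb_add_one (b n : ℕ) : (Nat.clog b n : ℝ) < logb b n + 1 := by
  rw [← natCeil_logb_natCast]
  exact Nat.ceil_lt_add_one (logb_natCast_nonneg b n)

end Real

def HalvingRecurrence (a : ℕ → ℕ) : Prop :=
  ∀ p, 2 ≤ p → a p = (p + 1) / 2 + a ((p + 1) / 2) + a ((p + 1) / 2 - 1)

namespace HalvingRecurrence

variable {a : ℕ → ℕ}

theorem mul_clog_le_four_mul (h : HalvingRecurrence a) (n : ℕ) : n * Nat.clog 2 n ≤ 4 * a n := by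
  induction n using Nat.strong_induction_on with
  | _ n ih =>
  rcases lt_or_ge n 2 with hn | hn
  · simp [Nat.clog_of_right_le_one (by omega : n ≤ 1)]
  obtain ⟨k, hk⟩ : ∃ k, (n + 1) / 2 = k + 1 := ⟨(n + 1) / 2 - 1, by omega⟩
  have hsucc := Nat.clog_succ_le_clog_add_one 2 k
  have hself : Nat.clog 2 k ≤ k := Nat.clog_le_of_le_pow Nat.lt_two_pow_self.le
  have ih₁ := ih (k + 1) (by omega)
  have ih₀ := ih k (by omega)
  have hn2 : n ≤ 2 * (k + 1) := by omega
  rw [h n hn, Nat.clog_two_of_two_le hn, hk, Nat.add_sub_cancel]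
  nlinarith

theorem le_mul_clog_add_one (h : HalvingRecurrence a) (ha0 : a 0 = 0) (ha1 : a 1 = 1) (n : ℕ) :
    a n ≤ n * (Nat.clog 2 n + 1) := by
  induction n using Nat.strong_induction_on with
  | _ n ih =>
  rcases lt_or_ge n 2 with hn | hn
  · interval_cases n <;> simp [ha0, ha1]
  obtain ⟨k, hk⟩ : ∃ k, (n + 1) / 2 = k + 1 := ⟨(n + 1) / 2 - 1, by omega⟩
  have hmono : Nat.clog 2 k ≤ Nat.clog 2 (k + 1) := Nat.clog_mono_right 2 k.le_succ
  have ih₁ := ih (k + 1) (by omega)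
  have ih₀ := ih k (by omega)
  have hn2 : 2 * k + 1 ≤ n := by omega
  rw [h n hn, Nat.clog_two_of_two_le hn, hk, Nat.add_sub_cancel]
  nlinarith

end HalvingRecurrence

/-- If `a 0 = 0`, `a 1 = 1` and `a p = ⌈p/2⌉ + a ⌈p/2⌉ + a (⌈p/2⌉ - 1)` for `p ≥ 2`,
then `a n = Θ(n log n)`: there are constants `c₁, c₂ > 0` with
`c₁ n log₂ n ≤ a n ≤ c₂ n log₂ n` for all `n ≥ 2`. -/
theorem stmt_4 (a : ℕ → ℕ) (ha0 : a 0 = 0) (ha1 : a 1 = 1)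
    (harec : ∀ p, 2 ≤ p → a p = (p + 1) / 2 + a ((p + 1) / 2) + a ((p + 1) / 2 - 1)) :
    ∃ c₁ c₂ : ℝ, 0 < c₁ ∧ 0 < c₂ ∧ ∀ n : ℕ, 2 ≤ n →
      c₁ * n * Real.logb 2 n ≤ (a n : ℝ) ∧ (a n : ℝ) ≤ c₂ * n * Real.logb 2 n := by
  refine ⟨1 / 4, 3, by norm_num, by norm_num, fun n hn => ?_⟩
  have hlogb : 1 ≤ Real.logb 2 n := by
    rw [Real.le_logb_iff_rpow_le one_lt_two (by positivity), Real.rpow_one]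
    exact_mod_cast hn
  have hclog_ge : Real.logb 2 n ≤ Nat.clog 2 n := by
    exact_mod_cast Real.logb_natCast_le_clog 2 n
  have hclog_lt : (Nat.clog 2 n : ℝ) < Real.logb 2 n + 1 := by
    exact_mod_cast Real.natCast_clog_lt_logb_add_one 2 n
  have lower : (n : ℝ) * Nat.clog 2 n ≤ 4 * a n := by
    exact_mod_cast HalvingRecurrence.mul_clog_le_four_mul harec n
  have upper : (a n : ℝ) ≤ n * (Nat.clog 2 n + 1) := by
    exact_mod_cast HalvingRecurrence.le_mul_clog_add_one harec ha0 ha1 n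
  have hn0 : (0 : ℝ) ≤ n := n.cast_nonneg
  constructor <;> linarith [mul_le_mul_of_nonneg_left hclog_ge hn0,
    mul_le_mul_of_nonneg_left hclog_lt.le hn0, mul_le_mul_of_nonneg_left hlogb hn0]
end

section
/- Let $t \geq 1$, $q \geq 1$, and let $r : V \to \mathbb{N}$ be a function on the vertices of a graph $G$ of linearly bounded growth with parameter $q$ (every ball of radius $\rho$ has at most $q\rho$ vertices). Fix a vertex $v$ with $r(v) > 0$, and suppose that for every integer $k \geq 1$: $r(v) - 2k - 2t \leq \sum_{u \in S(v,k,k+2t)} r(u)$, where $S(v,k_1,k_2)$ is the set of vertices at distance between $k_1$ and $k_2$ from $v$. Then with $\alpha = \frac{1}{8tq}$ and $\beta = \frac{3}{2q}$: $\alpha\, r(v) - \beta \leq \frac{1}{|S(v,1,r(v)/2)|} \sum_{u \in S(v,1,r(v)/2)} r(u)$. -/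
/-!
Write `R = r v`, `N = R / 2` and `K = N - 2t`. Summing the hypothesis over `k = 1, …, K`, every
crown `S(v, k, k + 2t)` lies in `S(v, 1, N)` and each vertex lies in at most `2t + 1` of them, so
`K (R - N - 1) ≤ (2t + 1) ∑_{S(v,1,N)} r`. Linear growth gives `|S(v,1,N)| ≤ qN`, and for
`R > 12t` the two bounds combine to the claim; for `R ≤ 12t` the left side is not positive.
-/

open Finset

theorem card_filter_window_le (K n w : ℕ) :
    #{k ∈ Icc 1 K | k ≤ n ∧ n ≤ k + w} ≤ w + 1 := by
  calc #{k ∈ Icc 1 K | k ≤ n ∧ n ≤ k + w}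
      ≤ #(Icc (n - w) n) :=
        card_le_card fun k hk => by simp only [mem_filter, mem_Icc] at hk ⊢; omega
    _ ≤ w + 1 := by rw [Nat.card_Icc]; omega

theorem sum_Icc_sum_filter_window_le {α M : Type*} [AddCommMonoid M] [PartialOrder M]
    [IsOrderedAddMonoid M] (s : Finset α) (d : α → ℕ) (f : α → M) (hf : ∀ u ∈ s, 0 ≤ f u)
    (K w : ℕ) :
    ∑ k ∈ Icc 1 K, ∑ u ∈ s with k ≤ d u ∧ d u ≤ k + w, f u ≤
      (w + 1) • ∑ u ∈ s with 1 ≤ d u ∧ d u ≤ K + w, f u := by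
  rw [sum_comm' (t' := {u ∈ s | 1 ≤ d u ∧ d u ≤ K + w})
    (s' := fun u => {k ∈ Icc 1 K | k ≤ d u ∧ d u ≤ k + w})
    (fun k u => by simp only [mem_filter, mem_Icc]; grind), smul_sum]
  refine sum_le_sum fun u hu => ?_
  rw [sum_const]
  exact nsmul_le_nsmul_left (hf u (mem_filter.1 hu).1) (card_filter_window_le K (d u) w)

theorem sum_Icc_sub_two_mul (a : ℝ) (K : ℕ) :
    ∑ k ∈ Icc 1 K, (a - 2 * k) = K * (a - K - 1) := by
  induction K with
  | zero => simp
  | succ n ih =>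
    rw [sum_Icc_succ_top (by omega), ih]
    push_cast
    ring

theorem mul_le_sum_of_forall_le_sum_window {α : Type*} (s : Finset α) (d : α → ℕ) (f : α → ℝ)
    (hf : ∀ u ∈ s, 0 ≤ f u) {a c : ℝ} {w : ℕ}
    (h : ∀ k : ℕ, 1 ≤ k → a - 2 * k - c ≤ ∑ u ∈ s with k ≤ d u ∧ d u ≤ k + w, f u) (K : ℕ) :
    K * (a - c - K - 1) ≤ (w + 1) * ∑ u ∈ s with 1 ≤ d u ∧ d u ≤ K + w, f u :=
  calc (K : ℝ) * (a - c - K - 1) = ∑ k ∈ Icc 1 K, (a - c - 2 * k) := by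
        rw [sum_Icc_sub_two_mul]
    _ ≤ ∑ k ∈ Icc 1 K, ∑ u ∈ s with k ≤ d u ∧ d u ≤ k + w, f u :=
        sum_le_sum fun k hk => by linarith [h k (mem_Icc.1 hk).1]
    _ ≤ (w + 1) • ∑ u ∈ s with 1 ≤ d u ∧ d u ≤ K + w, f u :=
        sum_Icc_sum_filter_window_le s d f hf K w
    _ = (w + 1) * ∑ u ∈ s with 1 ≤ d u ∧ d u ≤ K + w, f u := by
        rw [nsmul_eq_mul]; push_cast; ring

theorem one_div_mul_sub_div_eq {T Q : ℝ} (hT : T ≠ 0) (hQ : Q ≠ 0) (R : ℝ) :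
    1 / (8 * T * Q) * R - 3 / (2 * Q) = (R - 12 * T) / (8 * T * Q) := by
  field_simp
  ring

theorem sub_mul_le_of_window_count {T R N s : ℝ} (hT : 1 ≤ T) (hR : 12 * T + 1 ≤ R)
    (hN₁ : R ≤ 2 * N + 1) (hN₂ : 2 * N ≤ R)
    (h : (N - 2 * T) * (R - N - 1) ≤ (2 * T + 1) * s) :
    (R - 12 * T) * N ≤ 8 * T * s := by
  refine le_of_mul_le_mul_left ?_ (by linarith : 0 < 2 * T + 1)
  calc (2 * T + 1) * ((R - 12 * T) * N)
      ≤ (2 * T + 1) * ((R - 12 * T) * (R / 2)) := by gcongr <;> linarith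
    _ ≤ 2 * T * ((R - 4 * T - 1) * (R - 2)) := by
      -- the difference is `(T - 1/2) R² + 4 T² R + 16 T² + 4 T`
      nlinarith [mul_nonneg (by linarith : 0 ≤ T - 1 / 2) (sq_nonneg R),
        mul_nonneg (sq_nonneg T) (by linarith : 0 ≤ 4 * R + 16)]
    _ ≤ 8 * T * ((N - 2 * T) * (R - N - 1)) := by
      have := mul_le_mul (by linarith : (R - 4 * T - 1) / 2 ≤ N - 2 * T)
        (by linarith : (R - 2) / 2 ≤ R - N - 1) (by linarith) (by linarith)
      nlinarith
    _ ≤ (2 * T + 1) * (8 * T * s) := by nlinarith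

theorem sub_div_le_div_of_sub_mul_le {T Q R N C s : ℝ} (hT : 0 < T) (hQ : 0 < Q)
    (hR : 12 * T ≤ R) (hC : 0 < C) (hCN : C ≤ Q * N) (h : (R - 12 * T) * N ≤ 8 * T * s) :
    (R - 12 * T) / (8 * T * Q) ≤ s / C := by
  rw [div_le_div_iff₀ (by positivity) hC]
  calc (R - 12 * T) * C ≤ (R - 12 * T) * (Q * N) := mul_le_mul_of_nonneg_left hCN (by linarith)
    _ = Q * ((R - 12 * T) * N) := by ring
    _ ≤ Q * (8 * T * s) := by gcongr
    _ = s * (8 * T * Q) := by ring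

theorem stmt_8_general {V : Type*} [Fintype V] (G : SimpleGraph V) (t q : ℕ)
    (ht : 1 ≤ t) (hq : 1 ≤ q)
    (hgrowth : ∀ (v : V) (ρ : ℕ), 1 ≤ ρ →
      (Finset.univ.filter (fun u => G.dist v u ≤ ρ)).card ≤ q * ρ)
    (r : V → ℕ) (v : V)
    (hsim : ∀ k : ℕ, 1 ≤ k →
      (r v : ℝ) - 2 * k - 2 * t ≤
        ∑ u ∈ Finset.univ.filter (fun u => k ≤ G.dist v u ∧ G.dist v u ≤ k + 2 * t),
          (r u : ℝ)) :
    (1 / (8 * t * q) : ℝ) * r v - 3 / (2 * q) ≤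
      (∑ u ∈ Finset.univ.filter (fun u => 1 ≤ G.dist v u ∧ G.dist v u ≤ r v / 2),
          (r u : ℝ)) /
        ((Finset.univ.filter (fun u => 1 ≤ G.dist v u ∧ G.dist v u ≤ r v / 2)).card : ℝ) := by
  set N := r v / 2
  set S := univ.filter (fun u => 1 ≤ G.dist v u ∧ G.dist v u ≤ N)
  have ht' : (1 : ℝ) ≤ t := by exact_mod_cast ht
  have hq' : (1 : ℝ) ≤ q := by exact_mod_cast hq
  rw [one_div_mul_sub_div_eq (by positivity) (by positivity)]
  by_cases hsmall : r v ≤ 12 * t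
  · refine (div_nonpos_of_nonpos_of_nonneg ?_ (by positivity)).trans (by positivity)
    rw [sub_nonpos]
    exact_mod_cast hsmall
  obtain ⟨K, hKN⟩ : ∃ K, K + 2 * t = N := ⟨N - 2 * t, by omega⟩
  have hK : (K : ℝ) = N - 2 * t := by rw [← hKN]; push_cast; ring
  have hR : (12 * t + 1 : ℝ) ≤ r v := by exact_mod_cast (by omega : 12 * t + 1 ≤ r v)
  have hcount : ((N : ℝ) - 2 * t) * (r v - N - 1) ≤ (2 * t + 1) * ∑ u ∈ S, (r u : ℝ) := by
    have := mul_le_sum_of_forall_le_sum_window univ (G.dist v) (fun u => (r u : ℝ))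
      (fun _ _ => Nat.cast_nonneg _) hsim K
    rw [hKN, hK] at this
    push_cast at this
    linarith
  have hN₁ : (r v : ℝ) ≤ 2 * N + 1 := by exact_mod_cast (by omega : r v ≤ 2 * N + 1)
  have hN₂ : 2 * (N : ℝ) ≤ r v := by exact_mod_cast (by omega : 2 * N ≤ r v)
  have hmain := sub_mul_le_of_window_count ht' hR hN₁ hN₂ hcount
  have hS : 0 < #S := by
    have hN : (1 : ℝ) ≤ N := by exact_mod_cast (by omega : 1 ≤ N)
    have : 0 < ∑ u ∈ S, (r u : ℝ) := by nlinarith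
    exact card_pos.2 (nonempty_of_sum_ne_zero this.ne')
  have hSq : #S ≤ q * N :=
    (card_le_card fun u hu => by simp only [S, mem_filter] at hu ⊢; exact ⟨hu.1, hu.2.2⟩).trans
      (hgrowth v N (by omega))
  exact sub_div_le_div_of_sub_mul_le (by positivity) (by positivity) (by linarith)
    (by exact_mod_cast hS) (by exact_mod_cast hSq) hmain

/-- The summation step of the local average lemma.  Let `G` be a graph of linearly
bounded growth with parameter `q` and let `r : V → ℕ`.  If for a vertex `v` with
`r v > 0` the simulation-step inequality
`r v - 2k - 2t ≤ ∑_{u ∈ S(v,k,k+2t)} r u` holds for every `k ≥ 1`, then with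
`α = 1/(8tq)` and `β = 3/(2q)` the average of `r` over `S(v,1,r v / 2)` is at least
`α r v - β`. -/
theorem stmt_8 {V : Type*} [Fintype V] (G : SimpleGraph V) (t q : ℕ)
    (ht : 1 ≤ t) (hq : 1 ≤ q)
    (hgrowth : ∀ (v : V) (ρ : ℕ), 1 ≤ ρ →
      (Finset.univ.filter (fun u => G.dist v u ≤ ρ)).card ≤ q * ρ)
    (r : V → ℕ) (v : V) (hrv : 0 < r v)
    (hsim : ∀ k : ℕ, 1 ≤ k →
      (r v : ℝ) - 2 * k - 2 * t ≤
        ∑ u ∈ Finset.univ.filter (fun u => k ≤ G.dist v u ∧ G.dist v u ≤ k + 2 * t),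
          (r u : ℝ)) :
    (1 / (8 * t * q) : ℝ) * r v - 3 / (2 * q) ≤
      (∑ u ∈ Finset.univ.filter (fun u => 1 ≤ G.dist v u ∧ G.dist v u ≤ r v / 2),
          (r u : ℝ)) /
        ((Finset.univ.filter (fun u => 1 ≤ G.dist v u ∧ G.dist v u ≤ r v / 2)).card : ℝ) :=
  stmt_8_general G t q ht hq hgrowth r v hsim
end

section
/- On a cycle $C_n$ with distinct identifiers, any correct deterministic leader election algorithm has a node with running time at least $n/4$. Formally: there is no function $f$ (mapping a radius-$k$ labelled view and the value $n$ to a decision) that elects exactly one leader on every identifier assignment while every node decides based on a view of radius less than $n/4$. -/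
/-!
Suppose every node decides within radius `k` with `4k + 2 ≤ n`. Run the algorithm on two
instances with disjoint identifier ranges and let `v`, `v'` be their leaders. Build a third
identifier assignment that copies the radius-`k` view of `v` around node `0` and that of `v'`
around node `2k + 1`; these two balls are disjoint, and the remaining nodes get fresh
identifiers. Both `0` and `2k + 1` see exactly what a leader saw, so both are elected.
-/

namespace CycleLeaderElection

variable {n : ℕ}

def ball (n k : ℕ) : Set (ZMod n) := {x | ∃ j : ℤ, |j| ≤ k ∧ (j : ZMod n) = x}

def IsLocal {α β : Type*} (k : ℕ) (out : (ZMod n → α) → ZMod n → β) : Prop :=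
  ∀ (I I' : ZMod n → α) (v v' : ZMod n),
    (∀ j : ℤ, |j| ≤ (k : ℤ) → I (v + j) = I' (v' + j)) → out I v = out I' v'

lemma natCast_add_notMem_ball {k m : ℕ} {j : ℤ} (hkm : 2 * k < m) (hmn : m + 2 * k < n)
    (hj : |j| ≤ k) : (m : ZMod n) + j ∉ ball n k := by
  rintro ⟨i, hi, hi_eq⟩
  have hdvd : (n : ℤ) ∣ m + j - i := by
    rw [← ZMod.intCast_zmod_eq_zero_iff_dvd]
    push_cast
    rw [hi_eq, sub_self]
  rw [abs_le] at hi hj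
  have := Int.eq_zero_of_abs_lt_dvd hdvd (by rw [abs_lt]; omega)
  omega

open Classical in
/-- Tag `0` copies the view around `v`, tag `1` the view around `v'`, tag `2` is fresh. -/
noncomputable def glue (k m : ℕ) (v v' x : ZMod n) : Fin 3 × ZMod n :=
  if x ∈ ball n k then (0, v + x)
  else if x - m ∈ ball n k then (1, v' + (x - m))
  else (2, x)

lemma glue_injective (k m : ℕ) (v v' : ZMod n) : Function.Injective (glue k m v v') := by
  intro x y h
  unfold glue at h
  split_ifs at h <;> simp_all

lemma glue_intCast {k m : ℕ} {j : ℤ} (v v' : ZMod n) (hj : |j| ≤ k) :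
    glue k m v v' j = (0, v + j) :=
  if_pos ⟨j, hj, rfl⟩

lemma glue_natCast_add_intCast {k m : ℕ} {j : ℤ} (v v' : ZMod n) (hkm : 2 * k < m)
    (hmn : m + 2 * k < n) (hj : |j| ≤ k) :
    glue k m v v' (m + j) = (1, v' + j) := by
  rw [glue, if_neg (natCast_add_notMem_ball hkm hmn hj), add_sub_cancel_left,
    if_pos ⟨j, hj, rfl⟩]

theorem IsLocal.not_electsLeader {α : Type*} {k : ℕ} {out : (ZMod n → α) → ZMod n → Bool}
    (hloc : IsLocal k out) (hkn : 4 * k + 2 ≤ n) (e : Fin 3 × ZMod n ↪ α) :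
    ¬ ∀ I : ZMod n → α, Function.Injective I → ∃! v, out I v = true := by
  intro helect
  obtain ⟨v, hv, -⟩ := helect (e ∘ Prod.mk 0) (e.injective.comp (Prod.mk_right_injective 0))
  obtain ⟨v', hv', -⟩ := helect (e ∘ Prod.mk 1) (e.injective.comp (Prod.mk_right_injective 1))
  set m := 2 * k + 1
  set J := e ∘ glue k m v v'
  obtain ⟨_, -, huniq⟩ := helect J (e.injective.comp (glue_injective k m v v'))
  have hJ0 : out J 0 = true := by
    rw [hloc J (e ∘ Prod.mk 0) 0 v fun j hj => by
      rw [zero_add]; exact congrArg e (glue_intCast v v' hj)]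
    exact hv
  have hJm : out J m = true := by
    rw [hloc J (e ∘ Prod.mk 1) m v' fun j hj =>
      congrArg e (glue_natCast_add_intCast v v' (by omega) (by omega) hj)]
    exact hv'
  have h0m : (0 : ZMod n) = m := (huniq 0 hJ0).trans (huniq _ hJm).symm
  have hm0 : (m : ZMod n) + (0 : ℤ) ∈ ball n k := by
    rw [Int.cast_zero, add_zero, ← h0m]
    exact ⟨0, by simp, Int.cast_zero⟩
  exact natCast_add_notMem_ball (by omega) (by omega) (by simp) hm0

end CycleLeaderElection

open CycleLeaderElection in
theorem stmt_11_general (n : ℕ) :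
    ¬ ∃ (k : ℕ) (out : (ZMod n → Fin (n ^ 3)) → ZMod n → Bool),
      k < n / 4 ∧
      (∀ (I I' : ZMod n → Fin (n ^ 3)) (v v' : ZMod n),
        (∀ j : ℤ, |j| ≤ (k : ℤ) → I (v + (j : ZMod n)) = I' (v' + (j : ZMod n))) →
        out I v = out I' v') ∧
      (∀ I : ZMod n → Fin (n ^ 3), Function.Injective I →
        ∃! v : ZMod n, out I v = true) := by
  rintro ⟨k, out, hk, hloc, helect⟩
  have hn : 4 ≤ n := by omega
  have : NeZero n := ⟨by omega⟩
  obtain ⟨e⟩ : Nonempty (Fin 3 × ZMod n ↪ Fin (n ^ 3)) :=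
    Function.Embedding.nonempty_of_card_le <| by
      simp only [Fintype.card_prod, Fintype.card_fin, ZMod.card, pow_three]
      nlinarith
  exact IsLocal.not_electsLeader (out := out) hloc (by omega) e helect

/-- Deterministic leader election on the `n`-cycle requires some node to have running
time at least `n/4`.  There is no local algorithm `out` (mapping an identifier
assignment, drawn from the polynomial space `Fin (n^3)`, and a node to a Boolean
output) which depends only on the radius-`k` view for some `k < n/4` and elects exactly
one leader on every injective identifier assignment. -/
theorem stmt_11 (n : ℕ) (hn : 3 ≤ n) :
    ¬ ∃ (k : ℕ) (out : (ZMod n → Fin (n ^ 3)) → ZMod n → Bool),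
      k < n / 4 ∧
      (∀ (I I' : ZMod n → Fin (n ^ 3)) (v v' : ZMod n),
        (∀ j : ℤ, |j| ≤ (k : ℤ) → I (v + (j : ZMod n)) = I' (v' + (j : ZMod n))) →
        out I v = out I' v') ∧
      (∀ I : ZMod n → Fin (n ^ 3), Function.Injective I →
        ∃! v : ZMod n, out I v = true) :=
  stmt_11_general n
end

section
/- Let $a(p)$ denote the maximum, over all injective identifier assignments to a path of $p$ internal nodes flanked by two endpoint 'marked' nodes with larger identifiers than all internal nodes, of the sum of running times of the internal nodes under the grow-until-dominated leader election algorithm. Then $a$ satisfies $a(p) = \max_{1 \leq k \leq \lceil p/2 \rceil} \{k + a(k-1) + a(p-k)\}$ with $a(0) = 0$, $a(1) = 1$. -/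
/-- Running time of node `i` of the path `0, 1, …, p+1` under the grow-until-dominated
algorithm: the least radius `k` at which `i` sees a node with a larger identifier. -/
noncomputable def pathRuntime (p : ℕ) (I : ℕ → ℕ) (i : ℕ) : ℕ :=
  sInf {k | ∃ j, j ≤ p + 1 ∧ j ≤ i + k ∧ i ≤ j + k ∧ I i < I j}

/-- Identifier assignments on the path `0, …, p+1` which are injective and whose two
endpoint ("marked") identifiers exceed all internal ones. -/
def validID (p : ℕ) (I : ℕ → ℕ) : Prop :=
  Set.InjOn I (Set.Icc 0 (p + 1)) ∧
    ∀ i, 1 ≤ i → i ≤ p → I i < I 0 ∧ I i < I (p + 1)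

/-- `aMax p`: the maximum, over all valid identifier assignments, of the sum of running
times of the `p` internal nodes. -/
noncomputable def aMax (p : ℕ) : ℕ :=
  sSup {s | ∃ I : ℕ → ℕ, validID p I ∧ s = ∑ i ∈ Finset.Icc 1 p, pathRuntime p I i}

/-!
Let `m` carry the largest internal identifier. It sees nothing larger before an endpoint, so its
running time is its distance `k = min m (p + 1 - m)` to the nearer endpoint. Every other node is
enclosed by `m` and an endpoint, both larger, and never looks past them, so it runs exactly as on
the subpath between them; restricting an optimal assignment to the two subpaths gives
`a p ≤ k + a (k - 1) + a (p - k)`. Conversely, since running times depend only on the relative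
order of identifiers, optimal assignments of the two subpaths can be relabelled order-preservingly
and glued around a new maximum at distance `k` from an endpoint.
-/

section Runtime

variable {p : ℕ} {I : ℕ → ℕ} {i : ℕ}

lemma pathRuntime_le {j k : ℕ} (hj : j ≤ p + 1) (hji : j ≤ i + k) (hij : i ≤ j + k)
    (h : I i < I j) : pathRuntime p I i ≤ k :=
  Nat.sInf_le ⟨j, hj, hji, hij, h⟩

lemma exists_dominator_pathRuntime {j : ℕ} (hj : j ≤ p + 1) (h : I i < I j) :
    ∃ j' ≤ p + 1, j' ≤ i + pathRuntime p I i ∧ i ≤ j' + pathRuntime p I i ∧ I i < I j' :=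
  Nat.sInf_mem (s := {k | ∃ j, j ≤ p + 1 ∧ j ≤ i + k ∧ i ≤ j + k ∧ I i < I j})
    ⟨i + j, j, hj, by omega, by omega, h⟩

lemma pathRuntime_congr {J : ℕ → ℕ} (h : ∀ j ≤ p + 1, I i < I j ↔ J i < J j) :
    pathRuntime p I i = pathRuntime p J i := by
  unfold pathRuntime
  congr 1
  ext k
  constructor <;> rintro ⟨j, hj, hji, hij, hlt⟩
  · exact ⟨j, hj, hji, hij, (h j hj).mp hlt⟩
  · exact ⟨j, hj, hji, hij, (h j hj).mpr hlt⟩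

/-- The two ends of the segment bound the running time of `i` by its distance to them, so `i`
never looks outside the segment. -/
lemma pathRuntime_eq_shift {q m : ℕ} (hmq : m + q ≤ p) (hl : I i < I m)
    (hr : I i < I (m + q + 1)) (hmi : m ≤ i) (hiq : i ≤ m + q + 1) :
    pathRuntime p I i = pathRuntime q (fun t => I (t + m)) (i - m) := by
  have hle_left : pathRuntime p I i ≤ i - m :=
    pathRuntime_le (j := m) (by omega) (by omega) (by omega) hl
  have hle_right : pathRuntime p I i ≤ m + q + 1 - i :=
    pathRuntime_le (j := m + q + 1) (by omega) (by omega) (by omega) hr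
  apply le_antisymm
  · obtain ⟨j, hj, hji, hij, hlt⟩ := exists_dominator_pathRuntime (p := q)
      (I := fun t => I (t + m)) (i := i - m) (j := 0) (by omega) (by simpa [Nat.sub_add_cancel hmi])
    simp only [Nat.sub_add_cancel hmi] at hlt
    exact pathRuntime_le (j := j + m) (by omega) (by omega) (by omega) hlt
  · obtain ⟨j, hj, hji, hij, hlt⟩ := exists_dominator_pathRuntime (p := p) (j := m) (by omega) hl
    have hmj : m ≤ j := by omega
    refine pathRuntime_le (j := j - m) (by omega) (by omega) (by omega) ?_
    simpa [Nat.sub_add_cancel hmi, Nat.sub_add_cancel hmj] using hlt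

lemma pathRuntime_le_self (h : I i < I 0) : pathRuntime p I i ≤ i :=
  pathRuntime_le (j := 0) (by omega) (by omega) (by omega) h

end Runtime

def IsPeak (p : ℕ) (I : ℕ → ℕ) (m : ℕ) : Prop :=
  ∀ i, 1 ≤ i → i ≤ p → i ≠ m → I i < I m

section Valid

variable {p : ℕ} {I : ℕ → ℕ}

lemma pathRuntime_of_isPeak (hI : validID p I) {m : ℕ} (hm1 : 1 ≤ m) (hmp : m ≤ p)
    (hpeak : IsPeak p I m) :
    pathRuntime p I m = min m (p + 1 - m) := by
  obtain ⟨h0, hend⟩ := hI.2 m hm1 hmp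
  apply le_antisymm
  · exact le_min (pathRuntime_le (j := 0) (by omega) (by omega) (by omega) h0)
      (pathRuntime_le (j := p + 1) le_rfl (by omega) (by omega) hend)
  · obtain ⟨j, hj, hj_le, hm_le, hlt⟩ :=
      exists_dominator_pathRuntime (p := p) (j := 0) (by omega) h0
    have hj_end : j = 0 ∨ j = p + 1 := by
      by_contra! hj'
      have hjm : j ≠ m := by rintro rfl; exact lt_irrefl _ hlt
      exact absurd (hpeak j (by omega) (by omega) hjm) (by omega)
    omega

lemma exists_isPeak (hI : validID p I) (hp : 1 ≤ p) :
    ∃ m, 1 ≤ m ∧ m ≤ p ∧ IsPeak p I m := by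
  obtain ⟨m, hm, hmax⟩ := Finset.exists_max_image (Finset.Icc 1 p) I
    ⟨1, Finset.mem_Icc.mpr ⟨le_rfl, hp⟩⟩
  obtain ⟨hm1, hmp⟩ := Finset.mem_Icc.mp hm
  refine ⟨m, hm1, hmp, fun i hi1 hip him => ?_⟩
  refine (hmax i (Finset.mem_Icc.mpr ⟨hi1, hip⟩)).lt_of_ne fun heq => him ?_
  exact hI.1 (Set.mem_Icc.mpr ⟨by omega, by omega⟩) (Set.mem_Icc.mpr ⟨by omega, by omega⟩) heq

lemma validID.shift (hI : validID p I) {q m : ℕ} (hmq : m + q ≤ p)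
    (hbounds : ∀ i, 1 ≤ i → i ≤ q → I (i + m) < I m ∧ I (i + m) < I (m + q + 1)) :
    validID q (fun t => I (t + m)) := by
  refine ⟨fun x hx y hy hxy => ?_, fun i hi1 hiq => ?_⟩
  · simp only [Set.mem_Icc] at hx hy
    have := hI.1 (Set.mem_Icc.mpr ⟨Nat.zero_le _, by omega⟩)
      (Set.mem_Icc.mpr ⟨Nat.zero_le _, by omega⟩) hxy
    omega
  · simpa [add_right_comm q 1 m, add_comm q m] using hbounds i hi1 hiq

end Valid

noncomputable def runtimeSum (p : ℕ) (I : ℕ → ℕ) : ℕ :=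
  ∑ i ∈ Finset.Icc 1 p, pathRuntime p I i

lemma runtimeSum_le_triangle {p : ℕ} {I : ℕ → ℕ} (hI : validID p I) :
    runtimeSum p I ≤ ∑ i ∈ Finset.Icc 1 p, i :=
  Finset.sum_le_sum fun i hi =>
    pathRuntime_le_self (hI.2 i (Finset.mem_Icc.mp hi).1 (Finset.mem_Icc.mp hi).2).1

lemma exists_validID (p : ℕ) : ∃ I, validID p I := by
  refine ⟨fun i => if i = 0 then p + 2 else i, fun x hx y hy hxy => ?_, fun i hi1 hip => ?_⟩
  · simp only [Set.mem_Icc] at hx hy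
    simp only at hxy
    split_ifs at hxy <;> omega
  · simp only
    split_ifs <;> omega

lemma runtimeSums_bddAbove (p : ℕ) :
    BddAbove {s | ∃ I, validID p I ∧ s = runtimeSum p I} :=
  ⟨∑ i ∈ Finset.Icc 1 p, i, by rintro s ⟨I, hI, rfl⟩; exact runtimeSum_le_triangle hI⟩

lemma runtimeSum_le_aMax {p : ℕ} {I : ℕ → ℕ} (hI : validID p I) : runtimeSum p I ≤ aMax p :=
  le_csSup (runtimeSums_bddAbove p) ⟨I, hI, rfl⟩

lemma exists_runtimeSum_eq_aMax (p : ℕ) : ∃ I, validID p I ∧ runtimeSum p I = aMax p := by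
  obtain ⟨I, hI⟩ := exists_validID p
  obtain ⟨J, hJ, hs⟩ : aMax p ∈ {s | ∃ I, validID p I ∧ s = runtimeSum p I} :=
    Nat.sSup_mem ⟨_, I, hI, rfl⟩ (runtimeSums_bddAbove p)
  exact ⟨J, hJ, hs.symm⟩

lemma aMax_zero : aMax 0 = 0 := by
  obtain ⟨I, -, hs⟩ := exists_runtimeSum_eq_aMax 0
  simpa [runtimeSum] using hs.symm

lemma sum_Icc_split {M : Type*} [AddCommMonoid M] (f : ℕ → M) {p m : ℕ} (hm1 : 1 ≤ m)
    (hmp : m ≤ p) :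
    ∑ i ∈ Finset.Icc 1 p, f i =
      ∑ i ∈ Finset.Icc 1 (m - 1), f i + f m + ∑ t ∈ Finset.Icc 1 (p - m), f (t + m) := by
  have hIcc : ∀ n, Finset.Icc 1 n = Finset.Ico 1 (n + 1) := fun n => rfl
  rw [hIcc, hIcc, hIcc, Finset.sum_Ico_add', Nat.sub_add_cancel hm1,
    show p - m + 1 + m = p + 1 by omega, add_comm 1 m, add_assoc,
    ← Finset.sum_eq_sum_Ico_succ_bot (show m < p + 1 by omega),
    Finset.sum_Ico_consecutive _ hm1 (by omega)]

lemma runtimeSum_eq_of_isPeak {p : ℕ} {I : ℕ → ℕ} (hI : validID p I) {m : ℕ} (hm1 : 1 ≤ m)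
    (hmp : m ≤ p) (hpeak : IsPeak p I m) :
    runtimeSum p I =
      runtimeSum (m - 1) I + min m (p + 1 - m) + runtimeSum (p - m) (fun t => I (t + m)) := by
  have hleft : ∀ i ∈ Finset.Icc 1 (m - 1), pathRuntime p I i = pathRuntime (m - 1) I i := by
    intro i hi
    obtain ⟨hi1, him⟩ := Finset.mem_Icc.mp hi
    simpa using pathRuntime_eq_shift (q := m - 1) (m := 0) (by omega) (hI.2 i hi1 (by omega)).1
      (by simpa [Nat.sub_add_cancel hm1] using hpeak i hi1 (by omega) (by omega))
      (Nat.zero_le _) (by omega)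
  have hright : ∀ t ∈ Finset.Icc 1 (p - m),
      pathRuntime p I (t + m) = pathRuntime (p - m) (fun t => I (t + m)) t := by
    intro t ht
    obtain ⟨ht1, htp⟩ := Finset.mem_Icc.mp ht
    simpa using pathRuntime_eq_shift (q := p - m) (m := m) (by omega)
      (hpeak (t + m) (by omega) (by omega) (by omega))
      (by simpa [Nat.add_sub_cancel' hmp] using (hI.2 (t + m) (by omega) (by omega)).2)
      (by omega) (by omega)
  rw [runtimeSum, sum_Icc_split _ hm1 hmp, pathRuntime_of_isPeak hI hm1 hmp hpeak,
    Finset.sum_congr rfl hleft, Finset.sum_congr rfl hright, runtimeSum, runtimeSum]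

lemma runtimeSum_le_of_isPeak {p : ℕ} {I : ℕ → ℕ} (hI : validID p I) {m : ℕ} (hm1 : 1 ≤ m)
    (hmp : m ≤ p) (hpeak : IsPeak p I m) :
    runtimeSum p I ≤ aMax (m - 1) + min m (p + 1 - m) + aMax (p - m) := by
  have hleft : validID (m - 1) I := by
    simpa using hI.shift (q := m - 1) (m := 0) (by omega) fun i hi1 him =>
      ⟨by simpa using (hI.2 i hi1 (by omega)).1,
        by simpa [Nat.sub_add_cancel hm1] using hpeak i hi1 (by omega) (by omega)⟩
  have hright : validID (p - m) (fun t => I (t + m)) :=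
    hI.shift (by omega) fun t ht1 htp =>
      ⟨hpeak (t + m) (by omega) (by omega) (by omega),
        by simpa [Nat.add_sub_cancel' hmp] using (hI.2 (t + m) (by omega) (by omega)).2⟩
  rw [runtimeSum_eq_of_isPeak hI hm1 hmp hpeak]
  gcongr
  · exact runtimeSum_le_aMax hleft
  · exact runtimeSum_le_aMax hright

lemma aMax_le_sup {p : ℕ} (hp : 1 ≤ p) :
    aMax p ≤ (Finset.Icc 1 ((p + 1) / 2)).sup (fun k => k + aMax (k - 1) + aMax (p - k)) := by
  obtain ⟨I, hI, hIsum⟩ := exists_runtimeSum_eq_aMax p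
  obtain ⟨m, hm1, hmp, hpeak⟩ := exists_isPeak hI hp
  rw [← hIsum]
  refine (runtimeSum_le_of_isPeak hI hm1 hmp hpeak).trans ?_
  rcases le_total m (p + 1 - m) with h | h
  · refine le_trans (le_of_eq ?_) (Finset.le_sup (f := fun k => k + aMax (k - 1) + aMax (p - k))
      (Finset.mem_Icc.mpr ⟨hm1, show m ≤ (p + 1) / 2 by omega⟩))
    rw [min_eq_left h]
    ring
  · refine le_trans (le_of_eq ?_) (Finset.le_sup (f := fun k => k + aMax (k - 1) + aMax (p - k))
      (Finset.mem_Icc.mpr ⟨show 1 ≤ p + 1 - m by omega, show p + 1 - m ≤ (p + 1) / 2 by omega⟩))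
    rw [min_eq_right h, show p + 1 - m - 1 = p - m by omega, show p - (p + 1 - m) = m - 1 by omega]
    ring

/-- Left identifiers are doubled and right ones doubled plus one, so both keep their order and
never collide; `2 * (L 0 + R 0) + 2` exceeds all of them. -/
def joinID (q r : ℕ) (L R : ℕ → ℕ) (i : ℕ) : ℕ :=
  if i = 0 then 2 * (L 0 + R 0) + 3
  else if i ≤ q then 2 * L i
  else if i = q + 1 then 2 * (L 0 + R 0) + 2
  else if i ≤ q + 1 + r then 2 * R (i - (q + 1)) + 1
  else 2 * (L 0 + R 0) + 4

section Join

variable {q r : ℕ} {L R : ℕ → ℕ}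

lemma joinID_lt_iff_left (hL : validID q L) {i j : ℕ} (hi1 : 1 ≤ i) (hiq : i ≤ q)
    (hj : j ≤ q + 1) : joinID q r L R i < joinID q r L R j ↔ L i < L j := by
  obtain ⟨h0, hend⟩ := hL.2 i hi1 hiq
  obtain rfl | rfl | ⟨hj1, hjq⟩ : j = 0 ∨ j = q + 1 ∨ (1 ≤ j ∧ j ≤ q) := by omega
  all_goals simp only [joinID]; split_ifs <;> first | contradiction | omega

lemma joinID_lt_iff_right (hR : validID r R) {i j : ℕ} (hi1 : 1 ≤ i) (hir : i ≤ r)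
    (hj : j ≤ r + 1) :
    joinID q r L R (i + (q + 1)) < joinID q r L R (j + (q + 1)) ↔ R i < R j := by
  obtain ⟨h0, hend⟩ := hR.2 i hi1 hir
  obtain rfl | rfl | ⟨hj1, hjr⟩ : j = 0 ∨ j = r + 1 ∨ (1 ≤ j ∧ j ≤ r) := by omega
  all_goals
    simp only [joinID, Nat.add_sub_cancel, zero_add]
    split_ifs <;> first | contradiction | omega

lemma validID_joinID (hL : validID q L) (hR : validID r R) :
    validID (q + 1 + r) (joinID q r L R) := by
  refine ⟨fun x hx y hy hxy => ?_, fun i hi1 hip => ?_⟩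
  · obtain ⟨-, hx⟩ := hx
    obtain ⟨-, hy⟩ := hy
    have hLx : 1 ≤ x → x ≤ q → L x < L 0 := fun h1 h2 => (hL.2 x h1 h2).1
    have hLy : 1 ≤ y → y ≤ q → L y < L 0 := fun h1 h2 => (hL.2 y h1 h2).1
    have hRx : q + 1 < x → x ≤ q + 1 + r → R (x - (q + 1)) < R 0 :=
      fun h1 h2 => (hR.2 _ (by omega) (by omega)).1
    have hRy : q + 1 < y → y ≤ q + 1 + r → R (y - (q + 1)) < R 0 :=
      fun h1 h2 => (hR.2 _ (by omega) (by omega)).1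
    have hLinj : x ≤ q → y ≤ q → L x = L y → x = y :=
      fun h1 h2 => hL.1 ⟨Nat.zero_le _, by omega⟩ ⟨Nat.zero_le _, by omega⟩
    have hRinj : q + 1 < x → q + 1 < y → R (x - (q + 1)) = R (y - (q + 1)) →
        x - (q + 1) = y - (q + 1) :=
      fun h1 h2 => hR.1 ⟨Nat.zero_le _, by omega⟩ ⟨Nat.zero_le _, by omega⟩
    simp only [joinID] at hxy
    split_ifs at hxy <;> omega
  · have hLi : i ≤ q → L i < L 0 := fun h => (hL.2 i hi1 h).1
    have hRi : q + 1 < i → R (i - (q + 1)) < R 0 := fun h => (hR.2 _ (by omega) (by omega)).1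
    simp only [joinID]
    split_ifs <;> first | contradiction | omega

lemma isPeak_joinID (hL : validID q L) (hR : validID r R) :
    IsPeak (q + 1 + r) (joinID q r L R) (q + 1) := by
  intro i hi1 hip hiq
  have hLi : i ≤ q → L i < L 0 := fun h => (hL.2 i hi1 h).1
  have hRi : q + 1 < i → R (i - (q + 1)) < R 0 := fun h => (hR.2 _ (by omega) (by omega)).1
  simp only [joinID]
  split_ifs <;> first | contradiction | omega

lemma runtimeSum_joinID (hL : validID q L) (hR : validID r R) (hqr : q ≤ r) :
    runtimeSum (q + 1 + r) (joinID q r L R) = runtimeSum q L + (q + 1) + runtimeSum r R := by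
  have hleft : runtimeSum q (joinID q r L R) = runtimeSum q L :=
    Finset.sum_congr rfl fun i hi => pathRuntime_congr fun j hj =>
      joinID_lt_iff_left hL (Finset.mem_Icc.mp hi).1 (Finset.mem_Icc.mp hi).2 hj
  have hright : runtimeSum r (fun t => joinID q r L R (t + (q + 1))) = runtimeSum r R :=
    Finset.sum_congr rfl fun i hi => pathRuntime_congr fun j hj =>
      joinID_lt_iff_right (L := L) hR (Finset.mem_Icc.mp hi).1 (Finset.mem_Icc.mp hi).2 hj
  rw [runtimeSum_eq_of_isPeak (validID_joinID hL hR) (m := q + 1) (by omega) (by omega)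
    (isPeak_joinID hL hR), min_eq_left (by omega),
    Nat.add_sub_cancel, Nat.add_sub_cancel_left, hleft, hright]

end Join

lemma add_aMax_le_aMax {q r : ℕ} (hqr : q ≤ r) : q + 1 + aMax q + aMax r ≤ aMax (q + 1 + r) := by
  obtain ⟨L, hL, hLsum⟩ := exists_runtimeSum_eq_aMax q
  obtain ⟨R, hR, hRsum⟩ := exists_runtimeSum_eq_aMax r
  calc q + 1 + aMax q + aMax r = runtimeSum (q + 1 + r) (joinID q r L R) := by
        rw [runtimeSum_joinID hL hR hqr, hLsum, hRsum]; ring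
    _ ≤ aMax (q + 1 + r) := runtimeSum_le_aMax (validID_joinID hL hR)

lemma aMax_eq_sup {p : ℕ} (hp : 1 ≤ p) :
    aMax p = (Finset.Icc 1 ((p + 1) / 2)).sup (fun k => k + aMax (k - 1) + aMax (p - k)) := by
  refine le_antisymm (aMax_le_sup hp) (Finset.sup_le fun k hk => ?_)
  obtain ⟨hk1, hkp⟩ := Finset.mem_Icc.mp hk
  have h := add_aMax_le_aMax (q := k - 1) (r := p - k) (by omega)
  rwa [Nat.sub_add_cancel hk1, Nat.add_sub_cancel' (by omega)] at h

/-- The worst-case sum of running times on a path of `p` internal nodes flanked by two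
larger-identifier endpoints satisfies `a 0 = 0`, `a 1 = 1` and
`a p = max_{1 ≤ k ≤ ⌈p/2⌉} (k + a (k-1) + a (p-k))`. -/
theorem stmt_13 :
    aMax 0 = 0 ∧ aMax 1 = 1 ∧
    ∀ p, 2 ≤ p →
      aMax p = (Finset.Icc 1 ((p + 1) / 2)).sup
        (fun k => k + aMax (k - 1) + aMax (p - k)) := by
  refine ⟨aMax_zero, ?_, fun p hp => aMax_eq_sup (by omega)⟩
  rw [aMax_eq_sup le_rfl]
  simp [aMax_zero]
end

section
/- For the grow-until-dominated leader election algorithm on an $n$-node cycle with distinct identifiers, the sum of all nodes' running times is at most $\lceil n/2 \rceil + a(n-1)$ where $a$ satisfies the recurrence $a(p)=\max_{1\le k\le\lceil p/2\rceil}\{k+a(k-1)+a(p-k)\}$, $a(0)=0$, $a(1)=1$; since $a(m) = O(m \log m)$, the node-averaged running time is $O(\log n)$. -/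
/-!
Cut the cycle open at the node `t` of maximal identifier: `t` runs for `⌈n/2⌉` rounds, and the
other `n - 1` nodes form a path guarded at both ends by `t`. On a guarded path of `p` nodes, the
node of largest identifier, at distance `k` from the nearer end, stops after at most `k` rounds
and splits the path into guarded paths of `k - 1` and `p - k` nodes; this is exactly the
recurrence defining `a`, so the path contributes at most `a p`. Induction gives
`a p ≤ (p + 1) log₂ (p + 1)`, because `2 k ≤ p + 1` makes `log₂ k ≤ log₂ (p + 1) - 1`.
-/

/-- Running time of node `v` on the `n`-cycle under the grow-until-dominated algorithm:
the least radius `k` at which `v` either sees a larger identifier or sees the whole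
cycle (`k ≥ ⌈n/2⌉`). -/
noncomputable def cycleRuntime (n : ℕ) (I : Fin n → ℕ) (v : Fin n) : ℕ :=
  sInf {k | (∃ u, (SimpleGraph.cycleGraph n).dist v u ≤ k ∧ I v < I u) ∨ (n + 1) / 2 ≤ k}

open Finset SimpleGraph Fin.CommRing

theorem Finset.exists_forall_ne_lt_of_injOn {α β : Type*} [LinearOrder β] {s : Finset α}
    (hs : s.Nonempty) {f : α → β} (hf : Set.InjOn f s) :
    ∃ t ∈ s, ∀ i ∈ s, i ≠ t → f i < f t := by
  obtain ⟨t, ht, hmax⟩ := s.exists_max_image f hs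
  exact ⟨t, ht, fun i hi hit => (hmax i hi).lt_of_ne fun h => hit (hf hi ht h)⟩

theorem Finset.sum_Ioo_eq_sum_Ioo_add_add_sum_Ioo {M : Type*} [AddCommMonoid M] (f : ℕ → M)
    {lo t hi : ℕ} (ht : t ∈ Ioo lo hi) :
    ∑ i ∈ Ioo lo hi, f i = ∑ i ∈ Ioo lo t, f i + f t + ∑ i ∈ Ioo t hi, f i := by
  rw [mem_Ioo] at ht
  simp only [← Ico_add_one_left_eq_Ioo]
  rw [← sum_Ico_consecutive f (by omega : lo + 1 ≤ t) ht.2.le,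
    sum_eq_sum_Ico_succ_bot ht.2, add_assoc]

theorem sum_Ioo_le_of_le_dist {a : ℕ → ℕ}
    (ha : ∀ l r, min (l + 1) (r + 1) + a l + a r ≤ a (l + r + 1))
    {f r : ℕ → ℕ} {lo hi : ℕ} (hlohi : lo < hi) (hinj : Set.InjOn f (Ioo lo hi))
    (hlo : ∀ i ∈ Ioo lo hi, f i < f lo) (hhi : ∀ i ∈ Ioo lo hi, f i < f hi)
    (hr : ∀ i ∈ Ioo lo hi, ∀ j ∈ Icc lo hi, f i < f j → r i ≤ Nat.dist i j) :
    ∑ i ∈ Ioo lo hi, r i ≤ a (hi - lo - 1) := by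
  induction hd : hi - lo using Nat.strong_induction_on generalizing lo hi with
  | _ d ih =>
  subst hd
  obtain hempty | hne := (Ioo lo hi).eq_empty_or_nonempty
  · simp [hempty]
  obtain ⟨t, ht, hmax⟩ := exists_forall_ne_lt_of_injOn hne hinj
  have ht' := mem_Ioo.mp ht
  have hleft : ∑ i ∈ Ioo lo t, r i ≤ a (t - lo - 1) := by
    have hsub : Ioo lo t ⊆ Ioo lo hi := Ioo_subset_Ioo_right ht'.2.le
    have hsub' : Icc lo t ⊆ Icc lo hi := Icc_subset_Icc_right ht'.2.le
    exact ih _ (by omega) ht'.1 (hinj.mono (coe_subset.mpr hsub)) (fun i hi => hlo i (hsub hi))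
      (fun i hi => hmax i (hsub hi) (mem_Ioo.mp hi).2.ne)
      (fun i hi j hj => hr i (hsub hi) j (hsub' hj)) rfl
  have hright : ∑ i ∈ Ioo t hi, r i ≤ a (hi - t - 1) := by
    have hsub : Ioo t hi ⊆ Ioo lo hi := Ioo_subset_Ioo_left ht'.1.le
    have hsub' : Icc t hi ⊆ Icc lo hi := Icc_subset_Icc_left ht'.1.le
    exact ih _ (by omega) ht'.2 (hinj.mono (coe_subset.mpr hsub))
      (fun i hi => hmax i (hsub hi) (mem_Ioo.mp hi).1.ne') (fun i hi => hhi i (hsub hi))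
      (fun i hi j hj => hr i (hsub hi) j (hsub' hj)) rfl
  have hrt_lo : r t ≤ t - lo := by
    simpa [Nat.dist_comm, Nat.dist_eq_sub_of_le ht'.1.le] using
      hr t ht lo (by simp [hlohi.le]) (hlo t ht)
  have hrt_hi : r t ≤ hi - t := by
    simpa [Nat.dist_eq_sub_of_le ht'.2.le] using hr t ht hi (by simp [hlohi.le]) (hhi t ht)
  have hsplit := ha (t - lo - 1) (hi - t - 1)
  rw [sum_Ioo_eq_sum_Ioo_add_add_sum_Ioo r ht]
  rw [show t - lo - 1 + (hi - t - 1) + 1 = hi - lo - 1 by omega] at hsplit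
  omega

structure IsSplitRecurrence (a : ℕ → ℕ) : Prop where
  zero : a 0 = 0
  one : a 1 = 1
  eq_sup : ∀ p, 2 ≤ p → a p = (Icc 1 ((p + 1) / 2)).sup fun k => k + a (k - 1) + a (p - k)

namespace IsSplitRecurrence

variable {a : ℕ → ℕ}

theorem eq_sup_of_pos (ha : IsSplitRecurrence a) {p : ℕ} (hp : 1 ≤ p) :
    a p = (Icc 1 ((p + 1) / 2)).sup fun k => k + a (k - 1) + a (p - k) := by
  obtain rfl | hp := hp.eq_or_lt
  · simp [ha.zero, ha.one]
  · exact ha.eq_sup p hp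

theorem min_succ_add_add_le (ha : IsSplitRecurrence a) (l r : ℕ) :
    min (l + 1) (r + 1) + a l + a r ≤ a (l + r + 1) := by
  wlog hlr : l ≤ r generalizing l r
  · have := this r l (by omega)
    rw [min_comm, add_comm r l] at this
    omega
  have hmem : l + 1 ∈ Icc 1 ((l + r + 1 + 1) / 2) := by
    rw [mem_Icc]
    omega
  calc min (l + 1) (r + 1) + a l + a r = l + 1 + a (l + 1 - 1) + a (l + r + 1 - (l + 1)) := by
        rw [min_eq_left (by omega)]; simp [add_comm l r]
    _ ≤ _ := le_sup (f := fun k => k + a (k - 1) + a (l + r + 1 - k)) hmem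
    _ = a (l + r + 1) := (ha.eq_sup_of_pos (by omega)).symm

theorem cast_le_mul_logb (ha : IsSplitRecurrence a) (p : ℕ) :
    (a p : ℝ) ≤ (p + 1) * Real.logb 2 (p + 1) := by
  induction p using Nat.strong_induction_on with
  | _ p ih =>
  obtain rfl | hp := Nat.eq_zero_or_pos p
  · simp [ha.zero]
  obtain ⟨k, hk, hsup⟩ := exists_mem_eq_sup (Icc 1 ((p + 1) / 2))
    ⟨1, by rw [mem_Icc]; omega⟩ fun k => k + a (k - 1) + a (p - k)
  rw [mem_Icc] at hk
  set L := Real.logb 2 (p + 1)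
  have hk1 : (1 : ℝ) ≤ k := by exact_mod_cast hk.1
  have h2k : 2 * (k : ℝ) ≤ p + 1 := by exact_mod_cast (by omega : 2 * k ≤ p + 1)
  have hleft : (a (k - 1) : ℝ) ≤ k * (L - 1) := by
    have hlog : Real.logb 2 k ≤ L - 1 := by
      have := Real.logb_le_logb_of_le (b := 2) (by norm_num) (by positivity) h2k
      rw [Real.logb_mul (by norm_num) (by positivity), Real.logb_self_eq_one (by norm_num)] at this
      linarith
    calc (a (k - 1) : ℝ) ≤ k * Real.logb 2 k := by
          simpa [Nat.cast_sub hk.1] using ih (k - 1) (by omega)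
      _ ≤ k * (L - 1) := by gcongr
  have hright : (a (p - k) : ℝ) ≤ (p + 1 - k) * L := by
    have hlog : Real.logb 2 (p + 1 - k) ≤ L :=
      Real.logb_le_logb_of_le (by norm_num) (by linarith) (by linarith)
    calc (a (p - k) : ℝ) ≤ (p + 1 - k) * Real.logb 2 (p + 1 - k) := by
          simpa [Nat.cast_sub (by omega : k ≤ p), sub_add_eq_add_sub] using ih (p - k) (by omega)
      _ ≤ (p + 1 - k) * L := by gcongr; linarith
  rw [ha.eq_sup_of_pos hp, hsup]
  push_cast
  linarith

theorem add_le_mul_log (ha : IsSplitRecurrence a) {n : ℕ} (hn : 3 ≤ n) :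
    (((n + 1) / 2 : ℕ) : ℝ) + a (n - 1) ≤ n * ((1 + 1 / Real.log 2) * Real.log n) := by
  have hn' : (3 : ℝ) ≤ n := by exact_mod_cast hn
  have hlog : 1 ≤ Real.log n := by
    rw [Real.le_log_iff_exp_le (by linarith)]
    linarith [Real.exp_one_lt_d9]
  have hhalf : (((n + 1) / 2 : ℕ) : ℝ) ≤ n := by exact_mod_cast (by omega : (n + 1) / 2 ≤ n)
  have han : (a (n - 1) : ℝ) ≤ n * Real.logb 2 n := by
    simpa [Nat.cast_sub (by omega : 1 ≤ n)] using ha.cast_le_mul_logb (n - 1)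
  calc (((n + 1) / 2 : ℕ) : ℝ) + a (n - 1) ≤ n * 1 + n * Real.logb 2 n := by linarith
    _ ≤ n * Real.log n + n * Real.logb 2 n := by gcongr
    _ = n * ((1 + 1 / Real.log 2) * Real.log n) := by rw [Real.logb]; ring

end IsSplitRecurrence

namespace SimpleGraph

variable {n : ℕ} [NeZero n]

theorem cycleGraph_dist_add_one_le (v : Fin n) : (cycleGraph n).dist v (v + 1) ≤ 1 := by
  obtain hn | hn : n = 1 ∨ 2 ≤ n := by have := NeZero.pos n; omega
  · subst hn
    simp
  · refine (dist_eq_one_iff_adj.mpr ?_).le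
    rw [cycleGraph_adj', add_sub_cancel_left]
    exact Or.inr (Fin.val_cast_of_lt hn)

theorem cycleGraph_dist_add_natCast_le (v : Fin n) (k : ℕ) :
    (cycleGraph n).dist v (v + k) ≤ k := by
  induction k with
  | zero => simp
  | succ k ih =>
    calc (cycleGraph n).dist v (v + (k + 1 : ℕ))
        ≤ (cycleGraph n).dist v (v + k) + (cycleGraph n).dist (v + k) (v + k + 1) := by
          rw [Nat.cast_succ, ← add_assoc]
          exact (cycleGraph_preconnected _ _).dist_triangle_left _
      _ ≤ k + 1 := add_le_add ih (cycleGraph_dist_add_one_le _)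

theorem cycleGraph_dist_add_natCast_add_natCast_le (v : Fin n) (i j : ℕ) :
    (cycleGraph n).dist (v + i) (v + j) ≤ Nat.dist i j := by
  wlog hij : i ≤ j generalizing i j
  · rw [dist_comm, Nat.dist_comm]
    exact this j i (by omega)
  have hvj : v + (j : Fin n) = v + i + (j - i : ℕ) := by
    rw [Nat.cast_sub hij]
    ring
  rw [hvj, Nat.dist_eq_sub_of_le hij]
  exact cycleGraph_dist_add_natCast_le _ _

end SimpleGraph

theorem cycleRuntime_le_dist {n : ℕ} {I : Fin n → ℕ} {v u : Fin n} (h : I v < I u) :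
    cycleRuntime n I v ≤ (SimpleGraph.cycleGraph n).dist v u :=
  Nat.sInf_le (Or.inl ⟨u, le_rfl, h⟩)

theorem cycleRuntime_le_half (n : ℕ) (I : Fin n → ℕ) (v : Fin n) :
    cycleRuntime n I v ≤ (n + 1) / 2 :=
  Nat.sInf_le (Or.inr le_rfl)

/-- Position `i` of the path is node `t + i`, so the maximal node `t` sits at both ends
`0` and `n`. -/
theorem sum_cycleRuntime_le {a : ℕ → ℕ}
    (ha : ∀ l r, min (l + 1) (r + 1) + a l + a r ≤ a (l + r + 1))
    {n : ℕ} [NeZero n] {I : Fin n → ℕ} (hI : Function.Injective I) :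
    ∑ v, cycleRuntime n I v ≤ (n + 1) / 2 + a (n - 1) := by
  obtain ⟨t, -, hmax⟩ := exists_forall_ne_lt_of_injOn univ_nonempty hI.injOn
  set f : ℕ → ℕ := fun i => I (t + i)
  set r : ℕ → ℕ := fun i => cycleRuntime n I (t + i)
  have hcast_ne : ∀ i ∈ Ioo 0 n, t + (i : Fin n) ≠ t := by
    intro i hi
    rw [mem_Ioo] at hi
    rw [Ne, add_eq_left, Fin.natCast_eq_zero]
    exact Nat.not_dvd_of_pos_of_lt hi.1 hi.2
  have hlt : ∀ i ∈ Ioo 0 n, f i < I t := fun i hi => hmax _ (mem_univ _) (hcast_ne i hi)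
  have hinj : Set.InjOn f (Ioo 0 n) := by
    intro i hi j hj hfij
    have := congrArg Fin.val (add_left_cancel (hI hfij))
    rwa [Fin.val_cast_of_lt (mem_Ioo.mp hi).2, Fin.val_cast_of_lt (mem_Ioo.mp hj).2] at this
  have hpath : ∑ i ∈ Ioo 0 n, r i ≤ a (n - 0 - 1) :=
    sum_Ioo_le_of_le_dist ha (NeZero.pos n) hinj (by simpa [f] using hlt)
      (by simpa [f, Fin.natCast_self] using hlt)
      fun i _ j _ hij => (cycleRuntime_le_dist hij).trans
        (SimpleGraph.cycleGraph_dist_add_natCast_add_natCast_le t i j)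
  have hsum : ∑ v, cycleRuntime n I v = r 0 + ∑ i ∈ Ioo 0 n, r i :=
    calc ∑ v, cycleRuntime n I v = ∑ i : Fin n, cycleRuntime n I (t + i) :=
          (Equiv.sum_comp (Equiv.addLeft t) _).symm
      _ = ∑ i : Fin n, r i := by simp only [r, Fin.cast_val_eq_self]
      _ = ∑ i ∈ range n, r i := Fin.sum_univ_eq_sum_range r n
      _ = r 0 + ∑ i ∈ Ioo 0 n, r i := by
          rw [range_eq_Ico, sum_eq_sum_Ico_succ_bot (NeZero.pos n), Ico_add_one_left_eq_Ioo]
  have hr0 : r 0 ≤ (n + 1) / 2 := cycleRuntime_le_half n I _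
  rw [hsum]
  simpa only [Nat.sub_zero] using add_le_add hr0 hpath

/-- For the grow-until-dominated leader election algorithm on an `n`-node cycle with
distinct identifiers, the sum of all running times is at most `⌈n/2⌉ + a (n-1)` where
`a` satisfies the recurrence `a p = max_{1 ≤ k ≤ ⌈p/2⌉} (k + a (k-1) + a (p-k))`,
`a 0 = 0`, `a 1 = 1`; since `a m = O(m log m)`, the node-averaged running time is
`O(log n)`. -/
theorem stmt_14 (a : ℕ → ℕ) (ha0 : a 0 = 0) (ha1 : a 1 = 1)
    (harec : ∀ p, 2 ≤ p →
      a p = (Finset.Icc 1 ((p + 1) / 2)).sup (fun k => k + a (k - 1) + a (p - k))) :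
    (∀ n : ℕ, 3 ≤ n → ∀ I : Fin n → ℕ, Function.Injective I →
      ∑ v : Fin n, cycleRuntime n I v ≤ (n + 1) / 2 + a (n - 1)) ∧
    (∃ C : ℝ, 0 < C ∧ ∀ n : ℕ, 3 ≤ n → ∀ I : Fin n → ℕ, Function.Injective I →
      (1 / (n : ℝ)) * ∑ v : Fin n, (cycleRuntime n I v : ℝ) ≤ C * Real.log n) := by
  have ha : IsSplitRecurrence a := ⟨ha0, ha1, harec⟩
  have hsum : ∀ n : ℕ, 3 ≤ n → ∀ I : Fin n → ℕ, Function.Injective I →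
      ∑ v : Fin n, cycleRuntime n I v ≤ (n + 1) / 2 + a (n - 1) := fun n hn _ hI =>
    have : NeZero n := ⟨by omega⟩
    sum_cycleRuntime_le ha.min_succ_add_add_le hI
  refine ⟨hsum, 1 + 1 / Real.log 2, by positivity, fun n hn I hI => ?_⟩
  rw [one_div, inv_mul_le_iff₀ (by positivity), ← Nat.cast_sum]
  calc ((∑ v, cycleRuntime n I v : ℕ) : ℝ) ≤ (((n + 1) / 2 : ℕ) : ℝ) + a (n - 1) := by
        exact_mod_cast hsum n hn I hI
    _ ≤ n * ((1 + 1 / Real.log 2) * Real.log n) := ha.add_le_mul_log hn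
end
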